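/- Let φ : A⁺ → S be a surjective semigroup homomorphism onto a finite semigroup S, let φ_bd : A⁺ → S_φ be the quotient map onto the Pin–Thérien expansion S_φ = A⁺/∼_φ, and let p_φ : S_φ → S be the unique homomorphism with φ = p_φ ∘ φ_bd. Then p_φ restricts to an isomorphism from the subsemigroup of S_φ generated by the regular elements of S_φ onto the subsemigroup of S generated by the regular elements of S. -/

import Mathlib

/- A surjective semigroup homomorphism `φ : A⁺ → S` is encoded by the monoid
homomorphism `ψ = φ^I : A^* → S^I = WithOne S` satisfying `ψ w ≠ 1` for `w ≠ 1`
and whose image contains `S`. -/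

/-- Green `R`-quasi-order on a monoid. -/
def RLe {M : Type*} [Monoid M] (s t : M) : Prop := ∃ x, s = t * x

/-- Strict Green `R`-order. -/
def RLt {M : Type*} [Monoid M] (s t : M) : Prop := RLe s t ∧ ¬ RLe t s

/-- Green `L`-quasi-order on a monoid. -/
def LLe {M : Type*} [Monoid M] (s t : M) : Prop := ∃ x, s = x * t

/-- Strict Green `L`-order. -/
def LLt {M : Type*} [Monoid M] (s t : M) : Prop := LLe s t ∧ ¬ LLe t s

/-- `(x₀, a, x₁)` is a good factorization with respect to `ψ = φ^I`. -/
def GoodFact {A S : Type*} [Semigroup S] (ψ : FreeMonoid A →* WithOne S)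
    (x₀ : FreeMonoid A) (a : A) (x₁ : FreeMonoid A) : Prop :=
  RLt (ψ (x₀ * FreeMonoid.of a)) (ψ x₀) ∧ LLt (ψ (FreeMonoid.of a * x₁)) (ψ x₁)

/-- `(x₀, a, x₁)` is a good factorization of the word `w`. -/
def GoodFactOf {A S : Type*} [Semigroup S] (ψ : FreeMonoid A →* WithOne S)
    (w x₀ : FreeMonoid A) (a : A) (x₁ : FreeMonoid A) : Prop :=
  w = x₀ * FreeMonoid.of a * x₁ ∧ GoodFact ψ x₀ a x₁

/-- The Pin–Thérien congruence `∼_φ` on words. -/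
def PTRel {A S : Type*} [Semigroup S] (ψ : FreeMonoid A →* WithOne S)
    (x y : FreeMonoid A) : Prop :=
  ψ x = ψ y ∧
    (∀ (x₀ : FreeMonoid A) (a : A) (x₁ : FreeMonoid A), GoodFactOf ψ x x₀ a x₁ →
      ∃ y₀ y₁ : FreeMonoid A, GoodFactOf ψ y y₀ a y₁ ∧ ψ x₀ = ψ y₀ ∧ ψ x₁ = ψ y₁) ∧
    (∀ (y₀ : FreeMonoid A) (a : A) (y₁ : FreeMonoid A), GoodFactOf ψ y y₀ a y₁ →
      ∃ x₀ x₁ : FreeMonoid A, GoodFactOf ψ x x₀ a x₁ ∧ ψ x₀ = ψ y₀ ∧ ψ x₁ = ψ y₁)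

/-- The word `u` represents a regular element of the Pin–Thérien expansion `S_φ`. -/
def RegularWord {A S : Type*} [Semigroup S] (ψ : FreeMonoid A →* WithOne S)
    (u : FreeMonoid A) : Prop :=
  u ≠ 1 ∧ ∃ x : FreeMonoid A, x ≠ 1 ∧ PTRel ψ (u * x * u) u

/-- The word `u` represents an element of the subsemigroup of `S_φ` generated by
its regular elements, i.e. its `∼_φ`-class is a product of regular classes. -/
def MultiregularWord {A S : Type*} [Semigroup S] (ψ : FreeMonoid A →* WithOne S)
    (u : FreeMonoid A) : Prop :=
  ∃ l : List (FreeMonoid A), l ≠ [] ∧ (∀ w ∈ l, RegularWord ψ w) ∧ PTRel ψ u l.prod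

/-
A multiregular word is `∼_φ`-equivalent to a product of sandwiches `u x u` with
`φ(u) φ(x) φ(u) = φ(u)`, and no letter of such a product is the middle of a good
factorization: a letter in the first `u` sits in front of a suffix `x u` of idempotent
image, so the `L`-class cannot drop there, and a letter further right sits behind the
prefix `u`, after which the `R`-class stays that of `φ(u)`. Hence multiregular words have
no good factorizations at all, and two of them are `∼_φ`-equivalent as soon as they have
the same image. Conversely a regular `s = s t s` is the image of the regular word `a b a`,
where `φ(a) = s` and `φ(b) = t`.
-/

open FreeMonoid

theorem FreeMonoid.letter_in_left_or_right {A : Type*} {u v x₀ x₁ : FreeMonoid A} {a : A}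
    (h : u * v = x₀ * of a * x₁) :
    (∃ m, u = x₀ * of a * m ∧ x₁ = m * v) ∨ (∃ m, x₀ = u * m ∧ v = m * of a * x₁) := by
  have h' : u.toList ++ v.toList = x₀.toList ++ a :: x₁.toList := by
    simpa using congrArg toList h
  rcases List.append_eq_append_iff.mp h' with ⟨m, hx₀, hv⟩ | ⟨m, hu, hm⟩
  · exact .inr ⟨ofList m, toList.injective hx₀, toList.injective (by simpa using hv)⟩
  · rcases List.cons_eq_append_iff.mp hm with ⟨rfl, hv⟩ | ⟨m', rfl, hx₁⟩
    · exact .inr ⟨1, toList.injective (by simpa using hu.symm), toList.injective hv⟩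
    · exact .inl ⟨ofList m', toList.injective (by simpa using hu), toList.injective hx₁⟩

section Monoid

variable {M : Type*} [Monoid M]

theorem RLt.of_mul_left {z p c : M} (h : RLt (z * p * c) (z * p)) : RLt (p * c) p :=
  ⟨⟨c, rfl⟩, fun ⟨r, hr⟩ => h.2 ⟨r, (congrArg (z * ·) hr).trans (by simp only [mul_assoc])⟩⟩

theorem LLt.of_mul_right {z q c : M} (h : LLt (c * (q * z)) (q * z)) : LLt (c * q) q :=
  ⟨⟨c, rfl⟩, fun ⟨l, hl⟩ => h.2 ⟨l, (congrArg (· * z) hl).trans (by simp only [mul_assoc])⟩⟩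

variable {A : Type*} {ψ : FreeMonoid A →* M}

/-- Quantifying over the context `Z, Y` of `w` makes this property closed under products. -/
def NoGoodLetter (ψ : FreeMonoid A →* M) (w : FreeMonoid A) : Prop :=
  ∀ (Z Y : M) (y₀ : FreeMonoid A) (a : A) (y₁ : FreeMonoid A), w = y₀ * of a * y₁ →
    RLt (Z * ψ y₀ * ψ (of a)) (Z * ψ y₀) → ¬ LLt (ψ (of a) * (ψ y₁ * Y)) (ψ y₁ * Y)

theorem noGoodLetter_one : NoGoodLetter ψ 1 := by
  intro Z Y y₀ a y₁ h
  simpa using congrArg length h.symm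

theorem NoGoodLetter.mul {w₁ w₂ : FreeMonoid A} (h₁ : NoGoodLetter ψ w₁)
    (h₂ : NoGoodLetter ψ w₂) : NoGoodLetter ψ (w₁ * w₂) := by
  intro Z Y y₀ a y₁ h hR hL
  rcases letter_in_left_or_right h with ⟨m, hw₁, rfl⟩ | ⟨m, rfl, hw₂⟩
  · exact h₁ Z (ψ w₂ * Y) y₀ a m hw₁ hR (by simpa only [map_mul, mul_assoc] using hL)
  · exact h₂ (Z * ψ w₁) Y m a y₁ hw₂ (by simpa only [map_mul, mul_assoc] using hR) hL

theorem noGoodLetter_sandwich {u x : FreeMonoid A} (h : ψ u * ψ x * ψ u = ψ u) :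
    NoGoodLetter ψ (u * x * u) := by
  intro Z Y y₀ a y₁ hw hR hL
  rw [mul_assoc] at hw
  rcases letter_in_left_or_right hw with ⟨m, hu, rfl⟩ | ⟨m, rfl, hxu⟩
  · refine hL.2 ⟨ψ m * ψ x * ψ y₀, ?_⟩
    calc ψ (m * (x * u)) * Y = ψ m * ψ x * (ψ u * ψ x * ψ u) * Y := by
          rw [h]; simp only [map_mul, mul_assoc]
      _ = ψ m * ψ x * ψ y₀ * (ψ (of a) * (ψ (m * (x * u)) * Y)) := by
          nth_rewrite 1 [hu]; simp only [map_mul, mul_assoc]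
  · refine hR.2 ⟨ψ y₁ * ψ m, ?_⟩
    calc Z * ψ (u * m) = Z * (ψ u * ψ x * ψ u) * ψ m := by
          rw [h]; simp only [map_mul, mul_assoc]
      _ = Z * ψ (u * m) * ψ (of a) * (ψ y₁ * ψ m) := by
          rw [mul_assoc (ψ u), ← map_mul, hxu]; simp only [map_mul, mul_assoc]

end Monoid

section PinTherien

variable {A S : Type*} [Semigroup S] {ψ : FreeMonoid A →* WithOne S}

def NoGoodFact (ψ : FreeMonoid A →* WithOne S) (u : FreeMonoid A) : Prop :=
  ∀ (x₀ : FreeMonoid A) (a : A) (x₁ : FreeMonoid A), ¬ GoodFactOf ψ u x₀ a x₁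

def GoodFactsEmbed (ψ : FreeMonoid A →* WithOne S) (u v : FreeMonoid A) : Prop :=
  ∀ (x₀ : FreeMonoid A) (a : A) (x₁ : FreeMonoid A), GoodFactOf ψ u x₀ a x₁ →
    ∃ y₀ y₁ : FreeMonoid A, GoodFactOf ψ v y₀ a y₁ ∧ ψ x₀ = ψ y₀ ∧ ψ x₁ = ψ y₁

theorem ptRel_iff {u v : FreeMonoid A} :
    PTRel ψ u v ↔ ψ u = ψ v ∧ GoodFactsEmbed ψ u v ∧ GoodFactsEmbed ψ v u := by
  refine and_congr_right fun _ => and_congr_right fun _ => ?_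
  constructor <;> intro h y₀ a y₁ hy <;> obtain ⟨x₀, x₁, hx, e₀, e₁⟩ := h y₀ a y₁ hy <;>
    exact ⟨x₀, x₁, hx, e₀.symm, e₁.symm⟩

theorem ptRel_refl (u : FreeMonoid A) : PTRel ψ u u :=
  ⟨rfl, fun x₀ _ x₁ h => ⟨x₀, x₁, h, rfl, rfl⟩, fun x₀ _ x₁ h => ⟨x₀, x₁, h, rfl, rfl⟩⟩

theorem NoGoodLetter.noGoodFact {w : FreeMonoid A} (h : NoGoodLetter ψ w) :
    NoGoodFact ψ w := by
  rintro x₀ a x₁ ⟨hw, hR, hL⟩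
  exact h 1 1 x₀ a x₁ hw (by simpa only [one_mul, map_mul] using hR)
    (by simpa only [mul_one, map_mul] using hL)

theorem NoGoodFact.goodFactsEmbed {u : FreeMonoid A} (hu : NoGoodFact ψ u)
    (v : FreeMonoid A) : GoodFactsEmbed ψ u v :=
  fun x₀ a x₁ h => (hu x₀ a x₁ h).elim

theorem GoodFactsEmbed.noGoodFact {u v : FreeMonoid A} (h : GoodFactsEmbed ψ u v)
    (hv : NoGoodFact ψ v) : NoGoodFact ψ u := fun x₀ a x₁ hu => by
  obtain ⟨y₀, y₁, hy, -⟩ := h x₀ a x₁ hu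
  exact hv y₀ a y₁ hy

theorem ptRel_of_noGoodFact {u v : FreeMonoid A} (h : ψ u = ψ v) (hu : NoGoodFact ψ u)
    (hv : NoGoodFact ψ v) : PTRel ψ u v :=
  ptRel_iff.2 ⟨h, hu.goodFactsEmbed v, hv.goodFactsEmbed u⟩

theorem GoodFactsEmbed.trans {u v w : FreeMonoid A} (h : GoodFactsEmbed ψ u v)
    (h' : GoodFactsEmbed ψ v w) : GoodFactsEmbed ψ u w := fun x₀ a x₁ hu => by
  obtain ⟨y₀, y₁, hv, e₀, e₁⟩ := h x₀ a x₁ hu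
  obtain ⟨z₀, z₁, hw, f₀, f₁⟩ := h' y₀ a y₁ hv
  exact ⟨z₀, z₁, hw, e₀.trans f₀, e₁.trans f₁⟩

theorem GoodFactsEmbed.mul_left {u v : FreeMonoid A} (h : GoodFactsEmbed ψ u v)
    (hval : ψ u = ψ v) (z : FreeMonoid A) : GoodFactsEmbed ψ (z * u) (z * v) := by
  rintro x₀ a x₁ ⟨hzu, hR, hL⟩
  rcases letter_in_left_or_right hzu with ⟨m, rfl, rfl⟩ | ⟨m, rfl, hu⟩
  · have e : ψ (m * u) = ψ (m * v) := by rw [map_mul, map_mul, hval]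
    exact ⟨x₀, m * v, ⟨by simp only [mul_assoc], hR, by simpa only [map_mul, hval] using hL⟩,
      rfl, e⟩
  · have hRu : RLt (ψ (m * of a)) (ψ m) := by
      rw [map_mul]; exact RLt.of_mul_left (z := ψ z) (by simpa only [map_mul] using hR)
    obtain ⟨n₀, n₁, ⟨hv, -, hnL⟩, e₀, e₁⟩ := h m a x₁ ⟨hu, hRu, hL⟩
    exact ⟨z * n₀, n₁, ⟨by rw [hv]; simp only [mul_assoc],
      by simpa only [map_mul, e₀] using hR, hnL⟩, by rw [map_mul, map_mul, e₀], e₁⟩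

theorem GoodFactsEmbed.mul_right {u v : FreeMonoid A} (h : GoodFactsEmbed ψ u v)
    (hval : ψ u = ψ v) (z : FreeMonoid A) : GoodFactsEmbed ψ (u * z) (v * z) := by
  rintro x₀ a x₁ ⟨huz, hR, hL⟩
  rcases letter_in_left_or_right huz with ⟨m, hu, rfl⟩ | ⟨m, rfl, rfl⟩
  · have hLu : LLt (ψ (of a * m)) (ψ m) := by
      rw [map_mul]; exact LLt.of_mul_right (z := ψ z) (by simpa only [map_mul] using hL)
    obtain ⟨n₀, n₁, ⟨hv, hnR, -⟩, e₀, e₁⟩ := h x₀ a m ⟨hu, hR, hLu⟩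
    exact ⟨n₀, n₁ * z, ⟨by rw [hv]; simp only [mul_assoc], hnR,
      by simpa only [map_mul, e₁] using hL⟩, e₀, by rw [map_mul, map_mul, e₁]⟩
  · have e : ψ (u * m) = ψ (v * m) := by rw [map_mul, map_mul, hval]
    exact ⟨v * m, x₁, ⟨by simp only [mul_assoc], by simpa only [map_mul, hval] using hR, hL⟩,
      e, rfl⟩

theorem GoodFactsEmbed.mul {u u' v v' : FreeMonoid A} (hu : GoodFactsEmbed ψ u u')
    (hu' : ψ u = ψ u') (hv : GoodFactsEmbed ψ v v') (hv' : ψ v = ψ v') :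
    GoodFactsEmbed ψ (u * v) (u' * v') :=
  (hu.mul_right hu' v).trans (hv.mul_left hv' u')

theorem PTRel.mul {u u' v v' : FreeMonoid A} (hu : PTRel ψ u u') (hv : PTRel ψ v v') :
    PTRel ψ (u * v) (u' * v') := by
  obtain ⟨hψu, huu', hu'u⟩ := ptRel_iff.1 hu
  obtain ⟨hψv, hvv', hv'v⟩ := ptRel_iff.1 hv
  exact ptRel_iff.2 ⟨by rw [map_mul, map_mul, hψu, hψv], huu'.mul hψu hvv' hψv,
    hu'u.mul hψu.symm hv'v hψv.symm⟩

theorem regularWord_sandwich {u x : FreeMonoid A} (hx : x ≠ 1)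
    (h : ψ u * ψ x * ψ u = ψ u) : RegularWord ψ (u * x * u) := by
  have hw : ψ (u * x * u) = ψ u := by rw [map_mul, map_mul, h]
  have hwxw : ψ (u * x * u) * ψ x * ψ (u * x * u) = ψ (u * x * u) := by rw [hw, h]
  refine ⟨fun h1 => hx (by simp_all), x, hx, ptRel_of_noGoodFact ?_ ?_ ?_⟩
  · rw [map_mul, map_mul, hwxw]
  · exact (noGoodLetter_sandwich hwxw).noGoodFact
  · exact (noGoodLetter_sandwich h).noGoodFact

theorem RegularWord.multiregularWord {u : FreeMonoid A} (hu : RegularWord ψ u) :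
    MultiregularWord ψ u :=
  ⟨[u], List.cons_ne_nil _ _, by simpa using hu, by simpa using ptRel_refl u⟩

theorem MultiregularWord.mul {u v : FreeMonoid A} (hu : MultiregularWord ψ u)
    (hv : MultiregularWord ψ v) : MultiregularWord ψ (u * v) := by
  obtain ⟨l, hl, hlr, hul⟩ := hu
  obtain ⟨l', -, hlr', hvl⟩ := hv
  refine ⟨l ++ l', by simp [hl], fun w hw => ?_, by simpa using hul.mul hvl⟩
  rcases List.mem_append.1 hw with hw | hw
  exacts [hlr w hw, hlr' w hw]

theorem MultiregularWord.noGoodFact {u : FreeMonoid A} (hu : MultiregularWord ψ u) :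
    NoGoodFact ψ u := by
  obtain ⟨l, -, hreg, hu⟩ := hu
  suffices ∃ W, ψ l.prod = ψ W ∧ GoodFactsEmbed ψ l.prod W ∧ NoGoodLetter ψ W by
    obtain ⟨W, -, hW, hWg⟩ := this
    exact ((ptRel_iff.1 hu).2.1.trans hW).noGoodFact hWg.noGoodFact
  clear hu
  induction l with
  | nil => exact ⟨1, rfl, noGoodLetter_one.noGoodFact.goodFactsEmbed 1, noGoodLetter_one⟩
  | cons w l ih =>
    obtain ⟨W, hψW, hW, hWg⟩ := ih fun v hv => hreg v (List.mem_cons_of_mem w hv)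
    obtain ⟨-, x, -, hx⟩ := hreg w List.mem_cons_self
    refine ⟨w * x * w * W, ?_, ?_, (noGoodLetter_sandwich ?_).mul hWg⟩
    · rw [List.prod_cons, map_mul, map_mul, hx.1, hψW]
    · exact (ptRel_iff.1 hx).2.2.mul hx.1.symm hW hψW
    · simpa only [map_mul] using hx.1

end PinTherien

theorem PT_expansion_regular_iso_general {A S : Type*} [Semigroup S]
    (ψ : FreeMonoid A →* WithOne S)
    (hsurj : ∀ s : S, ∃ w : FreeMonoid A, w ≠ 1 ∧ ψ w = ↑s) :
    (∀ u v : FreeMonoid A, MultiregularWord ψ u → MultiregularWord ψ v →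
        ψ u = ψ v → PTRel ψ u v) ∧
    (∀ s ∈ Subsemigroup.closure {s : S | ∃ x, s = s * x * s},
        ∃ u : FreeMonoid A, MultiregularWord ψ u ∧ ψ u = ↑s) := by
  refine ⟨fun u v hu hv h => ptRel_of_noGoodFact h hu.noGoodFact hv.noGoodFact, fun s hs => ?_⟩
  induction hs using Subsemigroup.closure_induction with
  | mem s hs =>
    obtain ⟨t, hst⟩ := hs
    obtain ⟨a, -, ha⟩ := hsurj s
    obtain ⟨b, hb, hb'⟩ := hsurj t
    have hab : ψ a * ψ b * ψ a = ψ a := by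
      rw [ha, hb', ← WithOne.coe_mul, ← WithOne.coe_mul, ← hst]
    exact ⟨a * b * a, (regularWord_sandwich hb hab).multiregularWord, by
      rw [map_mul, map_mul, hab, ha]⟩
  | mul s₁ s₂ _ _ ih₁ ih₂ =>
    obtain ⟨u₁, hu₁, h₁⟩ := ih₁
    obtain ⟨u₂, hu₂, h₂⟩ := ih₂
    exact ⟨u₁ * u₂, hu₁.mul hu₂, by rw [map_mul, h₁, h₂, WithOne.coe_mul]⟩

/-- The canonical projection `p_φ : S_φ → S` restricts to an isomorphism
`⟨Reg(S_φ)⟩ → ⟨Reg(S)⟩`: it is injective on classes of multiregular words and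
every element of `⟨Reg(S)⟩` is the image of a multiregular word. -/
theorem PT_expansion_regular_iso {A S : Type*} [Semigroup S] [Finite S]
    (ψ : FreeMonoid A →* WithOne S)
    (hne : ∀ w : FreeMonoid A, w ≠ 1 → ψ w ≠ 1)
    (hsurj : ∀ s : S, ∃ w : FreeMonoid A, w ≠ 1 ∧ ψ w = ↑s) :
    (∀ u v : FreeMonoid A, MultiregularWord ψ u → MultiregularWord ψ v →
        ψ u = ψ v → PTRel ψ u v) ∧
    (∀ s ∈ Subsemigroup.closure {s : S | ∃ x, s = s * x * s},
        ∃ u : FreeMonoid A, MultiregularWord ψ u ∧ ψ u = ↑s) :=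
  PT_expansion_regular_iso_general ψ hsurj
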